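/- arXiv:1901.07080 — 2 statements merged into one kernel-verified Lean document; each statement's English description precedes it below -/
import Mathlib

section
/- Let f : ℝ≥0 → ℝ≥0 be a decreasing right-continuous function with lim_{s→∞} f(s) = 0. Suppose there exist τ > 1 and B > 0 such that t·f(s+t) ≤ B·f(s)^τ for all t,s > 0. Then f(s) = 0 for all s ≥ S∞, where S∞ := 2B·f(0)^{τ-1}/(1 - 2^{1-τ}). -/
/-!
Put `a = f 0`, `r = 2^(1-τ)` and fix `ε > 0`. If `f s ≤ a` at some `s > 0`, the iteration
inequality with `t = 2 B a^(τ-1)` gives `f (s + t) ≤ B a^τ / t = a / 2`. Iterating from `ε`, with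
the bound `a / 2^k` at the `k`-th step, the waiting times are `2 B a^(τ-1) r^k`; they sum to
`S∞ = 2 B a^(τ-1) / (1 - r)`, so `f (ε + S∞) ≤ a / 2^k` for every `k`, i.e. `f` vanishes on
`(S∞, ∞)`, and at `S∞` itself by right-continuity.
-/

open Set Filter

lemma Real.div_two_pow_rpow {a : ℝ} (ha : 0 ≤ a) (τ : ℝ) (k : ℕ) :
    (a / 2 ^ k) ^ (τ - 1) = a ^ (τ - 1) * ((2 : ℝ) ^ (1 - τ)) ^ k := by
  rw [Real.div_rpow ha (by positivity), Real.rpow_pow_comm zero_le_two, div_eq_mul_inv,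
    ← Real.rpow_neg (by positivity), neg_sub]

lemma geom_sum_range_le_of_lt_one {r : ℝ} (hr₀ : 0 ≤ r) (hr₁ : r < 1) (n : ℕ) :
    ∑ i ∈ Finset.range n, r ^ i ≤ 1 / (1 - r) := by
  have := geom_sum_Ico_le_of_lt_one (m := 0) (n := n) hr₀ hr₁
  rwa [← Finset.range_eq_Ico, pow_zero] at this

lemma one_sub_two_rpow_one_sub_pos {τ : ℝ} (hτ : 1 < τ) : 0 < 1 - (2 : ℝ) ^ (1 - τ) :=
  sub_pos.2 (Real.rpow_lt_one_of_one_lt_of_neg one_lt_two (by linarith))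

lemma eq_of_continuousWithinAt_Ici_of_forall_gt {f : ℝ → ℝ} {S c : ℝ}
    (hf : ContinuousWithinAt f (Ici S) S) (hc : ∀ s, S < s → f s = c) : f S = c := by
  have hright : Tendsto f (nhdsWithin S (Ioi S)) (nhds (f S)) :=
    hf.mono Ioi_subset_Ici_self
  refine tendsto_nhds_unique hright (tendsto_const_nhds.congr' ?_)
  filter_upwards [self_mem_nhdsWithin] with s hs using (hc s hs).symm

namespace DeGiorgi

variable {f : ℝ → ℝ} {B τ : ℝ}

lemma le_half_after_step (hB : 0 < B) (hτ : 0 ≤ τ)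
    (hiter : ∀ s t : ℝ, 0 < s → 0 < t → t * f (s + t) ≤ B * f s ^ τ)
    {s a : ℝ} (hs : 0 < s) (ha : 0 < a) (hfs₀ : 0 ≤ f s) (hfs : f s ≤ a) :
    f (s + 2 * B * a ^ (τ - 1)) ≤ a / 2 := by
  set t := 2 * B * a ^ (τ - 1)
  have ht : 0 < t := by positivity
  have hBa : B * a ^ τ = t * (a / 2) := by
    simp only [t, Real.rpow_sub_one ha.ne']
    field_simp
  refine le_of_mul_le_mul_left ?_ ht
  calc t * f (s + t) ≤ B * f s ^ τ := hiter s t hs ht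
    _ ≤ B * a ^ τ := by gcongr
    _ = t * (a / 2) := hBa

lemma le_div_two_pow_after_steps (hB : 0 < B) (hτ : 0 ≤ τ)
    (hpos : ∀ s : ℝ, 0 ≤ s → 0 ≤ f s)
    (hiter : ∀ s t : ℝ, 0 < s → 0 < t → t * f (s + t) ≤ B * f s ^ τ)
    {s₀ a : ℝ} (hs₀ : 0 < s₀) (ha : 0 < a) (hfs₀ : f s₀ ≤ a) (k : ℕ) :
    f (s₀ + ∑ j ∈ Finset.range k, 2 * B * a ^ (τ - 1) * ((2 : ℝ) ^ (1 - τ)) ^ j) ≤ a / 2 ^ k := by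
  induction k with
  | zero => simpa using hfs₀
  | succ k ih =>
    have hsk : 0 < s₀ + ∑ j ∈ Finset.range k, 2 * B * a ^ (τ - 1) * ((2 : ℝ) ^ (1 - τ)) ^ j := by
      have hsum := Finset.sum_nonneg fun j (_ : j ∈ Finset.range k) =>
        (by positivity : 0 ≤ 2 * B * a ^ (τ - 1) * ((2 : ℝ) ^ (1 - τ)) ^ j)
      linarith
    have hstep := le_half_after_step hB hτ hiter hsk (by positivity) (hpos _ hsk.le) ih
    rw [Real.div_two_pow_rpow ha.le] at hstep
    rw [Finset.sum_range_succ, ← add_assoc, pow_succ, ← div_div]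
    convert hstep using 3
    ring

lemma eq_zero_of_gt (hB : 0 < B) (hτ : 1 < τ)
    (hpos : ∀ s : ℝ, 0 ≤ s → 0 ≤ f s)
    (hdec : ∀ s t : ℝ, 0 ≤ s → s ≤ t → f t ≤ f s)
    (hiter : ∀ s t : ℝ, 0 < s → 0 < t → t * f (s + t) ≤ B * f s ^ τ)
    {s : ℝ} (hs : 2 * B * f 0 ^ (τ - 1) / (1 - 2 ^ (1 - τ)) < s) : f s = 0 := by
  set r : ℝ := 2 ^ (1 - τ)
  have hr₀ : 0 < r := by positivity
  have hr₁ : r < 1 := sub_pos.1 (one_sub_two_rpow_one_sub_pos hτ)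
  set c := 2 * B * f 0 ^ (τ - 1)
  have hc : 0 ≤ c := by have := hpos 0 le_rfl; positivity
  have hS : 0 ≤ c / (1 - r) := div_nonneg hc (by linarith)
  refine le_antisymm ?_ (hpos s (by linarith))
  rcases (hpos 0 le_rfl).eq_or_lt with hf0 | hf0
  · exact hf0 ▸ hdec 0 s le_rfl (by linarith)
  have hpartial (k : ℕ) : ∑ j ∈ Finset.range k, c * r ^ j ≤ c / (1 - r) := by
    rw [← Finset.mul_sum, ← mul_one_div]
    exact mul_le_mul_of_nonneg_left (geom_sum_range_le_of_lt_one hr₀.le hr₁ k) hc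
  have hbound (k : ℕ) : f s ≤ f 0 / 2 ^ k := by
    have hs₀ : 0 < s - c / (1 - r) := by linarith
    have hsum : 0 ≤ ∑ j ∈ Finset.range k, c * r ^ j :=
      Finset.sum_nonneg fun j _ => by positivity
    calc f s ≤ f (s - c / (1 - r) + ∑ j ∈ Finset.range k, c * r ^ j) :=
          hdec _ _ (by linarith) (by linarith [hpartial k])
      _ ≤ f 0 / 2 ^ k :=
          le_div_two_pow_after_steps hB (by linarith) hpos hiter hs₀ hf0 (hdec 0 _ le_rfl hs₀.le) k
  exact ge_of_tendsto'
    (tendsto_const_nhds.div_atTop (tendsto_pow_atTop_atTop_of_one_lt one_lt_two)) hbound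

end DeGiorgi

theorem deGiorgi_iteration_vanishing_general
    (f : ℝ → ℝ) (B τ : ℝ) (hτ : 1 < τ) (hB : 0 < B)
    (hpos : ∀ s : ℝ, 0 ≤ s → 0 ≤ f s)
    (hdec : ∀ s t : ℝ, 0 ≤ s → s ≤ t → f t ≤ f s)
    (hrc : ∀ s : ℝ, 0 ≤ s → ContinuousWithinAt f (Ici s) s)
    (hiter : ∀ s t : ℝ, 0 < s → 0 < t → t * f (s + t) ≤ B * f s ^ τ) :
    ∀ s : ℝ, 2 * B * f 0 ^ (τ - 1) / (1 - 2 ^ (1 - τ)) ≤ s → f s = 0 := by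
  set S := 2 * B * f 0 ^ (τ - 1) / (1 - 2 ^ (1 - τ))
  have hS : 0 ≤ S :=
    div_nonneg (by have := hpos 0 le_rfl; positivity) (one_sub_two_rpow_one_sub_pos hτ).le
  have hfS : f S = 0 := eq_of_continuousWithinAt_Ici_of_forall_gt (hrc S hS)
    fun s hs => DeGiorgi.eq_zero_of_gt hB hτ hpos hdec hiter hs
  intro s hs
  exact le_antisymm (hfS ▸ hdec S s hS hs) (hpos s (hS.trans hs))

/-- De Giorgi-type iteration lemma: a decreasing right-continuous `f : ℝ≥0 → ℝ≥0`
tending to `0` at infinity and satisfying `t·f(s+t) ≤ B·f(s)^τ` for all `s,t > 0`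
(with `τ > 1`, `B > 0`) vanishes for `s ≥ S∞ = 2B f(0)^{τ-1}/(1-2^{1-τ})`. -/
theorem deGiorgi_iteration_vanishing
    (f : ℝ → ℝ) (B τ : ℝ) (hτ : 1 < τ) (hB : 0 < B)
    (hpos : ∀ s : ℝ, 0 ≤ s → 0 ≤ f s)
    (hdec : ∀ s t : ℝ, 0 ≤ s → s ≤ t → f t ≤ f s)
    (hrc : ∀ s : ℝ, 0 ≤ s → ContinuousWithinAt f (Ici s) s)
    (hlim : Tendsto f atTop (nhds 0))
    (hiter : ∀ s t : ℝ, 0 < s → 0 < t → t * f (s + t) ≤ B * f s ^ τ) :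
    ∀ s : ℝ, 2 * B * f 0 ^ (τ - 1) / (1 - 2 ^ (1 - τ)) ≤ s → f s = 0 :=
  deGiorgi_iteration_vanishing_general f B τ hτ hB hpos hdec hrc hiter
end

section
/- Let Ω ⊂ ℝ^m be a bounded domain and u : Ω̄ → ℝ a continuous function with boundary values ψ on ∂Ω, where ψ is 2β-Hölder continuous. Suppose there exist a constant c₀ > 0 and δ₀ > 0 such that for all 0 < δ < δ₀, sup_{Ω_δ}(u_δ − u) ≤ c₀ δ^β, where u_δ(x) = sup_{|ζ|<δ} u(x+ζ) and Ω_δ = {x ∈ Ω : dist(x,∂Ω) > δ}. Then u is β-Hölder continuous on Ω̄, i.e. there is A > 0 with |u(x) − u(y)| ≤ A|x−y|^β for all x, y ∈ Ω̄. -/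
/-!
If two points lie deep in `Ω` compared with their distance `r`, the sup-convolution bound at a
radius comparable to `r` bounds `|u x - u y|` by a multiple of `r ^ β`. A point `x` at depth
`d < δ₀` is joined to a nearest boundary point `ξ` by the points `ξ + (2/3)^k (x - ξ)`; consecutive
ones are deep at scale `(2/3)^k d`, so a geometric series gives `|u x - u ξ| ≲ d ^ β`. Two points
near the boundary are compared through their nearest boundary points, where the `2β`-Hölder data
give `|ψ ξ - ψ η| ≲ |ξ - η| ^ (2β) ≲ |x - y| ^ β` at small scales; at large scales the
boundedness of `u` on the compact set `Ω̄` suffices.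
-/

open Set Metric Filter Topology Bornology

theorem exists_holder_of_bounded_of_local {X : Type*} [PseudoMetricSpace X] {s : Set X}
    {f : X → ℝ} {M ρ K β : ℝ} (hβ : 0 ≤ β) (hρ : 0 < ρ) (hM : ∀ x ∈ s, ‖f x‖ ≤ M)
    (hK : ∀ x ∈ s, ∀ y ∈ s, dist x y < ρ → |f x - f y| ≤ K * dist x y ^ β) :
    ∃ A : ℝ, 0 < A ∧ ∀ x ∈ s, ∀ y ∈ s, |f x - f y| ≤ A * dist x y ^ β := by
  refine ⟨max (max K (2 * M / ρ ^ β)) 1, by positivity, fun x hx y hy => ?_⟩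
  rcases lt_or_ge (dist x y) ρ with hclose | hfar
  · exact (hK x hx y hy hclose).trans (by gcongr; exact (le_max_left _ _).trans (le_max_left _ _))
  · have hM0 : 0 ≤ M := (norm_nonneg _).trans (hM x hx)
    calc |f x - f y| = ‖f x - f y‖ := (Real.norm_eq_abs _).symm
      _ ≤ 2 * M := by linarith [norm_sub_le (f x) (f y), hM x hx, hM y hy]
      _ = 2 * M / ρ ^ β * ρ ^ β := (div_mul_cancel₀ _ (by positivity)).symm
      _ ≤ 2 * M / ρ ^ β * dist x y ^ β := by gcongr
      _ ≤ max (max K (2 * M / ρ ^ β)) 1 * dist x y ^ β := by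
        gcongr; exact (le_max_right _ _).trans (le_max_left _ _)

theorem rpow_le_mul_rpow_of_le_mul {a k r β : ℝ} (ha : 0 ≤ a) (hk : 0 ≤ k) (hr : 0 ≤ r)
    (hβ : 0 ≤ β) (h : a ≤ k * r) : a ^ β ≤ k ^ β * r ^ β :=
  (Real.rpow_le_rpow ha h hβ).trans_eq (Real.mul_rpow hk hr)

def SupConvBound {X : Type*} [PseudoMetricSpace X] (Ω : Set X) (u : X → ℝ) (δ₀ : ℝ)
    (ω : ℝ → ℝ) : Prop :=
  ∀ δ, 0 < δ → δ < δ₀ → ∀ x ∈ {x ∈ Ω | δ < infDist x Ωᶜ}, sSup (u '' ball x δ) - u x ≤ ω δ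

theorem SupConvBound.abs_sub_le {X : Type*} [PseudoMetricSpace X] {Ω : Set X} {u : X → ℝ}
    {δ₀ δ : ℝ} {ω : ℝ → ℝ} (h : SupConvBound Ω u δ₀ ω) (hbdd : BddAbove (u '' Ω))
    (hδ : δ < δ₀) {x y : X} (hx : δ < infDist x Ωᶜ) (hy : δ < infDist y Ωᶜ)
    (hxy : dist x y < δ) : |u x - u y| ≤ ω δ := by
  have hδ0 : 0 < δ := dist_nonneg.trans_lt hxy
  have sub_le : ∀ a b, δ < infDist a Ωᶜ → dist a b < δ → u b - u a ≤ ω δ := by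
    intro a b ha hab
    have hball : ball a δ ⊆ Ω := (ball_subset_ball ha.le).trans ball_infDist_compl_subset
    have hle : u b ≤ sSup (u '' ball a δ) :=
      le_csSup (hbdd.mono (image_mono hball)) (mem_image_of_mem u (mem_ball'.2 hab))
    linarith [h δ hδ0 hδ a ⟨hball (mem_ball_self hδ0), ha⟩]
  exact abs_sub_le_iff.2 ⟨sub_le y x hy (by rwa [dist_comm]), sub_le x y hx hxy⟩

theorem le_infDist_lineMap {E : Type*} [NormedAddCommGroup E] [NormedSpace ℝ E] {s : Set E}
    {x ξ : E} {t : ℝ} (hξ : dist x ξ = infDist x s) (ht : t ≤ 1) :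
    t * infDist x s ≤ infDist (AffineMap.lineMap ξ x t) s := by
  have h := infDist_le_infDist_add_dist (x := x) (y := AffineMap.lineMap ξ x t) (s := s)
  rw [dist_comm, dist_lineMap_right, Real.norm_eq_abs, abs_of_nonneg (sub_nonneg.2 ht),
    dist_comm, hξ] at h
  linarith

theorem SupConvBound.abs_sub_le_of_infDist_eq_dist {E : Type*} [NormedAddCommGroup E]
    [NormedSpace ℝ E] {Ω : Set E} {u : E → ℝ} {c₀ β δ₀ : ℝ}
    (h : SupConvBound Ω u δ₀ fun δ => c₀ * δ ^ β) (hbdd : BddAbove (u '' Ω))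
    (hu : ContinuousOn u (closure Ω)) (hc₀ : 0 ≤ c₀) (hβ : 0 < β) {x ξ : E}
    (hξ : dist x ξ = infDist x Ωᶜ) (hd₀ : 0 < infDist x Ωᶜ) (hd : infDist x Ωᶜ < δ₀) :
    ξ ∈ closure Ω ∧ |u x - u ξ| ≤ c₀ * infDist x Ωᶜ ^ β / (1 - (2 / 3) ^ β) := by
  set d := infDist x Ωᶜ
  set p : ℕ → E := fun k => AffineMap.lineMap ξ x ((2 / 3 : ℝ) ^ k)
  have hdepth (k : ℕ) : (2 / 3) ^ k * d ≤ infDist (p k) Ωᶜ :=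
    le_infDist_lineMap hξ (pow_le_one₀ (by norm_num) (by norm_num))
  have hpΩ (k : ℕ) : p k ∈ Ω :=
    ball_infDist_compl_subset (mem_ball_self ((mul_pos (by positivity) hd₀).trans_le (hdepth k)))
  have hp : Tendsto p atTop (𝓝 ξ) := by
    have h0 : AffineMap.lineMap ξ x (0 : ℝ) = ξ := AffineMap.lineMap_apply_zero _ _
    exact (h0 ▸ AffineMap.lineMap_continuous.tendsto 0).comp
      (tendsto_pow_atTop_nhds_zero_of_lt_one (by norm_num) (by norm_num))
  have hξΩ : ξ ∈ closure Ω := mem_closure_of_tendsto hp (Eventually.of_forall hpΩ)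
  have hup : Tendsto (fun k => u (p k)) atTop (𝓝 (u ξ)) :=
    (hu ξ hξΩ).tendsto.comp
      (tendsto_nhdsWithin_iff.2 ⟨hp, Eventually.of_forall fun k => subset_closure (hpΩ k)⟩)
  have hstep (k : ℕ) : dist (u (p k)) (u (p (k + 1))) ≤ c₀ * d ^ β * ((2 / 3 : ℝ) ^ β) ^ k := by
    set t : ℝ := (2 / 3) ^ k
    have ht : 0 < t := by positivity
    have ht1 : t * d ≤ d := mul_le_of_le_one_left hd₀.le (pow_le_one₀ (by norm_num) (by norm_num))
    have htd : 0 < t * d := mul_pos ht hd₀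
    have hnext : t * (2 / 3) * d ≤ infDist (p (k + 1)) Ωᶜ := pow_succ (2 / 3 : ℝ) k ▸ hdepth (k + 1)
    have hpp : dist (p k) (p (k + 1)) = t * d / 3 := by
      rw [dist_lineMap_lineMap, Real.dist_eq, pow_succ, dist_comm, hξ,
        abs_of_pos (by linarith : (0 : ℝ) < t - t * (2 / 3))]
      ring
    -- the radius `t d / 2` exceeds the step `t d / 3` and is below the depth `2 t d / 3`
    calc dist (u (p k)) (u (p (k + 1))) ≤ c₀ * (t * d / 2) ^ β := by
          rw [Real.dist_eq]
          exact h.abs_sub_le hbdd (by linarith) (by linarith [hdepth k]) (by linarith)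
            (by rw [hpp]; linarith)
      _ ≤ c₀ * (t * d) ^ β := by gcongr; linarith
      _ = c₀ * d ^ β * ((2 / 3 : ℝ) ^ β) ^ k := by
        rw [Real.mul_rpow ht.le hd₀.le, Real.rpow_pow_comm (by norm_num)]; ring
  have hp0 : p 0 = x := by simp [p]
  refine ⟨hξΩ, ?_⟩
  simpa [hp0, Real.dist_eq] using dist_le_of_le_geometric_of_tendsto₀ _ _
    (Real.rpow_lt_one (by norm_num) (by norm_num) hβ) hstep hup

theorem SupConvBound.exists_mem_frontier_abs_sub_le {E : Type*} [NormedAddCommGroup E]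
    [NormedSpace ℝ E] [ProperSpace E] {Ω : Set E} {u : E → ℝ} {c₀ β δ₀ : ℝ}
    (h : SupConvBound Ω u δ₀ fun δ => c₀ * δ ^ β) (hΩ : IsOpen Ω) (hΩc : Ωᶜ.Nonempty)
    (hbdd : BddAbove (u '' Ω)) (hu : ContinuousOn u (closure Ω)) (hc₀ : 0 ≤ c₀) (hβ : 0 < β)
    {x : E} (hx : x ∈ closure Ω) (hd : infDist x Ωᶜ < δ₀) :
    ∃ ξ ∈ frontier Ω, dist x ξ = infDist x Ωᶜ ∧
      |u x - u ξ| ≤ c₀ / (1 - (2 / 3) ^ β) * infDist x Ωᶜ ^ β := by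
  obtain ⟨ξ, hξΩ, hξ⟩ := hΩ.isClosed_compl.exists_infDist_eq_dist hΩc x
  rw [hΩ.frontier_eq]
  rcases (infDist_nonneg : 0 ≤ infDist x Ωᶜ).eq_or_lt with hd₀ | hd₀
  · have hxΩ : x ∈ Ωᶜ := (hΩ.isClosed_compl.mem_iff_infDist_zero hΩc).2 hd₀.symm
    refine ⟨x, ⟨hx, hxΩ⟩, by rw [dist_self, hd₀], ?_⟩
    rw [← hd₀, Real.zero_rpow hβ.ne', sub_self, abs_zero, mul_zero]
  · obtain ⟨hξcl, hbound⟩ := h.abs_sub_le_of_infDist_eq_dist hbdd hu hc₀ hβ hξ.symm hd₀ hd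
    exact ⟨ξ, ⟨hξcl, hξΩ⟩, hξ.symm, hbound.trans_eq (div_mul_eq_mul_div _ _ _).symm⟩

theorem abs_sub_le_of_near_frontier {X : Type*} [PseudoMetricSpace X] {u : X → ℝ}
    {C Cψ β ρ : ℝ} {x y ξ η : X} (hC : 0 ≤ C) (hCψ : 0 ≤ Cψ) (hβ : 0 < β)
    (hxξ : dist x ξ ≤ 4 * dist x y) (hyη : dist y η ≤ 4 * dist x y) (hρ : dist x y ≤ ρ)
    (hux : |u x - u ξ| ≤ C * dist x ξ ^ β) (huy : |u y - u η| ≤ C * dist y η ^ β)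
    (hψ : |u ξ - u η| ≤ Cψ * dist ξ η ^ (2 * β)) :
    |u x - u y| ≤ (2 * C * 4 ^ β + Cψ * (9 * ρ) ^ β * 9 ^ β) * dist x y ^ β := by
  set r := dist x y
  have hr : 0 ≤ r := dist_nonneg
  have hξη : dist ξ η ≤ 9 * r := by
    linarith [dist_triangle4 ξ x y η, dist_comm ξ x]
  have hx' : dist x ξ ^ β ≤ 4 ^ β * r ^ β :=
    rpow_le_mul_rpow_of_le_mul dist_nonneg (by norm_num) hr hβ.le hxξ
  have hy' : dist y η ^ β ≤ 4 ^ β * r ^ β :=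
    rpow_le_mul_rpow_of_le_mul dist_nonneg (by norm_num) hr hβ.le hyη
  -- one factor `dist ξ η ^ β` is bounded by the scale `ρ`, the other gives the `r ^ β`
  have hψ' : dist ξ η ^ (2 * β) ≤ (9 * ρ) ^ β * (9 ^ β * r ^ β) := by
    rw [two_mul, Real.rpow_add' dist_nonneg (by linarith)]
    refine mul_le_mul ?_ ?_ (by positivity) (Real.rpow_nonneg (by linarith) _)
    · exact Real.rpow_le_rpow dist_nonneg (by linarith) hβ.le
    · exact rpow_le_mul_rpow_of_le_mul dist_nonneg (by norm_num) hr hβ.le hξη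
  calc |u x - u y| ≤ C * dist x ξ ^ β + Cψ * dist ξ η ^ (2 * β) + C * dist y η ^ β := by
        rw [abs_sub_comm] at huy
        linarith [abs_sub_le (u x) (u ξ) (u y), abs_sub_le (u ξ) (u η) (u y)]
    _ ≤ C * (4 ^ β * r ^ β) + Cψ * ((9 * ρ) ^ β * (9 ^ β * r ^ β)) + C * (4 ^ β * r ^ β) := by
        gcongr
    _ = (2 * C * 4 ^ β + Cψ * (9 * ρ) ^ β * 9 ^ β) * r ^ β := by ring

theorem SupConvBound.exists_local_holder {E : Type*} [NormedAddCommGroup E]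
    [NormedSpace ℝ E] [ProperSpace E] {Ω : Set E} {u : E → ℝ} {c₀ β δ₀ Cψ : ℝ}
    (h : SupConvBound Ω u δ₀ fun δ => c₀ * δ ^ β) (hΩo : IsOpen Ω) (hΩb : IsBounded Ω)
    (hbdd : BddAbove (u '' Ω)) (hu : ContinuousOn u (closure Ω)) (hc₀ : 0 ≤ c₀) (hβ : 0 < β)
    (hCψ : 0 ≤ Cψ)
    (hψ : ∀ ξ ∈ frontier Ω, ∀ ζ ∈ frontier Ω, |u ξ - u ζ| ≤ Cψ * dist ξ ζ ^ (2 * β)) :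
    ∃ K, ∀ x ∈ closure Ω, ∀ y ∈ closure Ω, dist x y < δ₀ / 4 →
      |u x - u y| ≤ K * dist x y ^ β := by
  set C := c₀ / (1 - (2 / 3) ^ β)
  have hC : 0 ≤ C :=
    div_nonneg hc₀ (sub_nonneg.2 (Real.rpow_le_one (by norm_num) (by norm_num) hβ.le))
  refine ⟨max (c₀ * 2 ^ β) (2 * C * 4 ^ β + Cψ * (9 * (δ₀ / 4)) ^ β * 9 ^ β),
    fun x hx y hy hxy => ?_⟩
  wlog hle : infDist x Ωᶜ ≤ infDist y Ωᶜ generalizing x y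
  · rw [abs_sub_comm, dist_comm]
    exact this y hy x hx (by rwa [dist_comm]) (le_of_not_ge hle)
  obtain rfl | hne := eq_or_ne x y
  · simp [Real.zero_rpow hβ.ne']
  have hr : 0 < dist x y := dist_pos.2 hne
  -- deep pairs are handled at radius `2 r`; otherwise both depths are below `4 r < δ₀`
  rcases le_or_gt (3 * dist x y) (infDist x Ωᶜ) with hdeep | hshallow
  · calc |u x - u y| ≤ c₀ * (2 * dist x y) ^ β :=
          h.abs_sub_le hbdd (by linarith) (by linarith) (by linarith) (by linarith)
      _ = c₀ * 2 ^ β * dist x y ^ β := by rw [Real.mul_rpow (by norm_num) hr.le]; ring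
      _ ≤ _ := by gcongr; exact le_max_left _ _
  · have hΩc : Ωᶜ.Nonempty := by
      have : Nontrivial E := ⟨⟨x, y, hne⟩⟩
      exact nonempty_compl.2 fun hΩ => NormedSpace.unbounded_univ ℝ E (hΩ ▸ hΩb)
    have hdy : infDist y Ωᶜ ≤ infDist x Ωᶜ + dist x y := by
      linarith [infDist_le_infDist_add_dist (s := Ωᶜ) (x := y) (y := x), dist_comm x y]
    obtain ⟨ξ, hξ, hxξ, hux⟩ :=
      h.exists_mem_frontier_abs_sub_le hΩo hΩc hbdd hu hc₀ hβ hx (by linarith)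
    obtain ⟨η, hη, hyη, huy⟩ :=
      h.exists_mem_frontier_abs_sub_le hΩo hΩc hbdd hu hc₀ hβ hy (by linarith)
    calc |u x - u y| ≤ (2 * C * 4 ^ β + Cψ * (9 * (δ₀ / 4)) ^ β * 9 ^ β) * dist x y ^ β :=
          abs_sub_le_of_near_frontier hC hCψ hβ (by linarith) (by linarith) hxy.le
            (by rwa [hxξ]) (by rwa [hyη]) (hψ ξ hξ η hη)
      _ ≤ _ := by gcongr; exact le_max_right _ _

theorem holder_up_to_boundary_general
    (m : ℕ) (Ω : Set (EuclideanSpace ℝ (Fin m)))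
    (hΩo : IsOpen Ω) (hΩb : Bornology.IsBounded Ω)
    (u ψ : EuclideanSpace ℝ (Fin m) → ℝ)
    (hu : ContinuousOn u (closure Ω))
    (β : ℝ) (hβ0 : 0 < β)
    -- ψ ∈ Lip_{2β}(∂Ω)
    (hψ : ∃ Cψ : ℝ, 0 ≤ Cψ ∧ ∀ ξ ∈ frontier Ω, ∀ ζ ∈ frontier Ω,
      |ψ ξ - ψ ζ| ≤ Cψ * dist ξ ζ ^ (2 * β))
    -- u = ψ on ∂Ω
    (hbd : ∀ ξ ∈ frontier Ω, u ξ = ψ ξ)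
    -- interior sup-convolution estimate
    (hsc : ∃ c₀ δ₀ : ℝ, 0 < c₀ ∧ 0 < δ₀ ∧ ∀ δ : ℝ, 0 < δ → δ < δ₀ →
      ∀ x ∈ {x ∈ Ω | δ < infDist x Ωᶜ},
        sSup (u '' ball x δ) - u x ≤ c₀ * δ ^ β) :
    ∃ A : ℝ, 0 < A ∧ ∀ x ∈ closure Ω, ∀ y ∈ closure Ω,
      |u x - u y| ≤ A * dist x y ^ β := by
  obtain ⟨Cψ, hCψ, hψ⟩ := hψ
  obtain ⟨c₀, δ₀, hc₀, hδ₀, hsc⟩ := hsc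
  have huψ : ∀ ξ ∈ frontier Ω, ∀ ζ ∈ frontier Ω, |u ξ - u ζ| ≤ Cψ * dist ξ ζ ^ (2 * β) := by
    intro ξ hξ ζ hζ
    rw [hbd ξ hξ, hbd ζ hζ]
    exact hψ ξ hξ ζ hζ
  obtain ⟨M, hM⟩ := hΩb.isCompact_closure.exists_bound_of_continuousOn hu
  have hbdd : BddAbove (u '' Ω) :=
    (hΩb.isCompact_closure.image_of_continuousOn hu).bddAbove.mono (image_mono subset_closure)
  obtain ⟨K, hK⟩ := SupConvBound.exists_local_holder hsc hΩo hΩb hbdd hu hc₀.le hβ0 hCψ huψ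
  exact exists_holder_of_bounded_of_local hβ0.le (by positivity) hM hK

/-- Interior sup-convolution estimates plus `2β`-Hölder boundary data upgrade to global
`β`-Hölder continuity on `Ω̄`. -/
theorem holder_up_to_boundary
    (m : ℕ) (Ω : Set (EuclideanSpace ℝ (Fin m)))
    (hΩo : IsOpen Ω) (hΩb : Bornology.IsBounded Ω)
    (u ψ : EuclideanSpace ℝ (Fin m) → ℝ)
    (hu : ContinuousOn u (closure Ω))
    (β : ℝ) (hβ0 : 0 < β) (hβ1 : β ≤ 1 / 2)
    -- ψ ∈ Lip_{2β}(∂Ω)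
    (hψ : ∃ Cψ : ℝ, 0 ≤ Cψ ∧ ∀ ξ ∈ frontier Ω, ∀ ζ ∈ frontier Ω,
      |ψ ξ - ψ ζ| ≤ Cψ * dist ξ ζ ^ (2 * β))
    -- u = ψ on ∂Ω
    (hbd : ∀ ξ ∈ frontier Ω, u ξ = ψ ξ)
    -- interior sup-convolution estimate
    (hsc : ∃ c₀ δ₀ : ℝ, 0 < c₀ ∧ 0 < δ₀ ∧ ∀ δ : ℝ, 0 < δ → δ < δ₀ →
      ∀ x ∈ {x ∈ Ω | δ < infDist x Ωᶜ},
        sSup (u '' ball x δ) - u x ≤ c₀ * δ ^ β) :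
    ∃ A : ℝ, 0 < A ∧ ∀ x ∈ closure Ω, ∀ y ∈ closure Ω,
      |u x - u y| ≤ A * dist x y ^ β :=
  holder_up_to_boundary_general m Ω hΩo hΩb u ψ hu β hβ0 hψ hbd hsc
end
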